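/- For nonnegative integers m, j define p_{m,j} = 3·2ᵐ·C(m+j, m)·∫₀¹∫₀¹ (1-a)³ aᵐ (1-(1-a)(1-b))ʲ / (3-(1-a)(2-b))^{m+j+1} db da. Then ∑_{m≥0} ∑_{j≥0} p_{m,j} = 1. -/

import Mathlib

noncomputable def pTX (m j : ℕ) : ℝ :=
  3 * 2^m * (Nat.choose (m + j) m : ℝ) *
    ∫ a in (0:ℝ)..1, ∫ b in (0:ℝ)..1,
      (1 - a)^3 * a^m * (1 - (1 - a) * (1 - b))^j / (3 - (1 - a) * (2 - b))^(m + j + 1)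

/-!
Write `D = 3 - (1 - a)(2 - b)` and `x = 1 - (1 - a)(1 - b)`, so that `0 ≤ x < D` on the unit
square and `D - x = 1 + a`. Summing the integrand over `j` is a negative binomial series,
`∑ⱼ C(m+j, m) xʲ / D^(m+j+1) = (D - x)^-(m+1) = (1 + a)^-(m+1)`, which no longer depends on `b`.
Summing `3 · 2ᵐ (1 - a)³ aᵐ / (1 + a)^(m+1)` over `m` is then a geometric series with ratio
`2a / (1 + a)`, with value `3 (1 - a)²`, and `∫₀¹ 3 (1 - a)² da = 1`. All summands are
nonnegative, so both sums may be exchanged with the integrals.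
-/

open MeasureTheory Set
open scoped Interval

theorem hasSum_intervalIntegral_of_nonneg {ι : Type*} [Countable ι] {μ : Measure ℝ} {a b : ℝ}
    {F : ι → ℝ → ℝ} {f : ℝ → ℝ}
    (hF_meas : ∀ n, AEStronglyMeasurable (F n) (μ.restrict (Ι a b)))
    (hF_nonneg : ∀ n, ∀ t ∈ Ι a b, 0 ≤ F n t) (hf : IntervalIntegrable f μ a b)
    (h_lim : ∀ t ∈ Ι a b, HasSum (fun n => F n t) (f t)) :
    HasSum (fun n => ∫ t in a..b, F n t ∂μ) (∫ t in a..b, f t ∂μ) :=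
  intervalIntegral.hasSum_integral_of_dominated_convergence F hF_meas
    (fun n => ae_of_all _ fun t ht => (Real.norm_of_nonneg (hF_nonneg n t ht)).le)
    (ae_of_all _ fun t ht => (h_lim t ht).summable)
    ((intervalIntegrable_congr fun t ht => (h_lim t ht).tsum_eq.symm).1 hf)
    (ae_of_all _ h_lim)

theorem hasSum_choose_mul_pow_div_pow (m : ℕ) {x D : ℝ} (hxD : |x| < D) :
    HasSum (fun j : ℕ => ((m + j).choose m : ℝ) * x ^ j / D ^ (m + j + 1))
      (1 / (D - x) ^ (m + 1)) := by
  have hD : 0 < D := (abs_nonneg x).trans_lt hxD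
  have hz : ‖x / D‖ < 1 := by
    rwa [Real.norm_eq_abs, abs_div, abs_of_pos hD, div_lt_one hD]
  have hDx : D - x ≠ 0 := by linarith [le_abs_self x]
  have hsum : 1 / (D - x) ^ (m + 1) = 1 / (1 - x / D) ^ (m + 1) / D ^ (m + 1) := by
    rw [one_sub_div hD.ne', div_pow]
    field_simp
  rw [hsum]
  refine (hasSum_choose_mul_geometric_of_norm_lt_one m hz).div_const _ |>.congr_fun fun j => ?_
  rw [add_comm j m, div_pow]
  field_simp
  ring

noncomputable def stitKernel (m j : ℕ) (a b : ℝ) : ℝ :=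
  (m + j).choose m *
    ((1 - a)^3 * a^m * (1 - (1 - a) * (1 - b))^j / (3 - (1 - a) * (2 - b))^(m + j + 1))

noncomputable def stitRowSum (m : ℕ) (a : ℝ) : ℝ :=
  (1 - a)^3 * a^m / (1 + a)^(m + 1)

theorem pTX_eq_integral_stitKernel (m j : ℕ) :
    pTX m j = 3 * 2^m * ∫ a in (0:ℝ)..1, ∫ b in (0:ℝ)..1, stitKernel m j a b := by
  simp only [pTX, stitKernel, intervalIntegral.integral_const_mul, mul_assoc]

theorem stitKernel_nonneg {a b : ℝ} (ha : a ∈ Icc (0:ℝ) 1) (hb : b ∈ Icc (0:ℝ) 1) (m j : ℕ) :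
    0 ≤ stitKernel m j a b := by
  obtain ⟨ha0, ha1⟩ := ha
  obtain ⟨hb0, hb1⟩ := hb
  have : 0 ≤ 1 - (1 - a) * (1 - b) := by nlinarith
  have : 0 ≤ 3 - (1 - a) * (2 - b) := by nlinarith
  have : 0 ≤ 1 - a := by linarith
  unfold stitKernel
  positivity

theorem stitRowSum_nonneg {a : ℝ} (ha : a ∈ Icc (0:ℝ) 1) (m : ℕ) : 0 ≤ stitRowSum m a := by
  have : 0 ≤ 1 - a := sub_nonneg.2 ha.2
  have : 0 ≤ a := ha.1
  unfold stitRowSum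
  positivity

theorem hasSum_stitKernel {a b : ℝ} (ha : a ∈ Icc (0:ℝ) 1) (hb : b ∈ Icc (0:ℝ) 1) (m : ℕ) :
    HasSum (fun j => stitKernel m j a b) (stitRowSum m a) := by
  obtain ⟨ha0, ha1⟩ := ha
  obtain ⟨hb0, hb1⟩ := hb
  have hx : 0 ≤ 1 - (1 - a) * (1 - b) := by nlinarith
  have hxD : |1 - (1 - a) * (1 - b)| < 3 - (1 - a) * (2 - b) := by
    rw [abs_of_nonneg hx]; linarith
  have hsum : stitRowSum m a =
      (1 - a)^3 * a^m * (1 / (3 - (1 - a) * (2 - b) - (1 - (1 - a) * (1 - b))) ^ (m + 1)) := by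
    unfold stitRowSum
    ring_nf
  rw [hsum]
  refine (hasSum_choose_mul_pow_div_pow m hxD).mul_left _ |>.congr_fun fun j => ?_
  simp only [stitKernel]
  ring

theorem measurable_intervalIntegral_stitKernel (m j : ℕ) :
    Measurable fun a => ∫ b in (0:ℝ)..1, stitKernel m j a b := by
  have hK : StronglyMeasurable (Function.uncurry (stitKernel m j)) := by
    unfold stitKernel; fun_prop
  simp only [intervalIntegral.integral_of_le zero_le_one]
  exact (hK.integral_prod_right (ν := volume.restrict (Ioc 0 1))).measurable

theorem uIoc_zero_one_subset_Icc : Ι (0:ℝ) 1 ⊆ Icc 0 1 :=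
  uIoc_subset_uIcc.trans (uIcc_of_le zero_le_one).subset

theorem hasSum_integral_stitKernel (m : ℕ) :
    HasSum (fun j => ∫ a in (0:ℝ)..1, ∫ b in (0:ℝ)..1, stitKernel m j a b)
      (∫ a in (0:ℝ)..1, stitRowSum m a) := by
  have hI := uIoc_zero_one_subset_Icc
  refine hasSum_intervalIntegral_of_nonneg
    (fun j => (measurable_intervalIntegral_stitKernel m j).aestronglyMeasurable)
    (fun j a ha => intervalIntegral.integral_nonneg zero_le_one
      fun b hb => stitKernel_nonneg (hI ha) hb m j) ?_ fun a ha => ?_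
  · refine ContinuousOn.intervalIntegrable (ContinuousOn.div (by fun_prop) (by fun_prop) ?_)
    intro a ha
    have : 0 ≤ a := by rw [uIcc_of_le zero_le_one] at ha; exact ha.1
    positivity
  · have hb_meas (j : ℕ) : Measurable fun b => stitKernel m j a b := by
      unfold stitKernel; fun_prop
    simpa using hasSum_intervalIntegral_of_nonneg (μ := volume)
      (fun j => (hb_meas j).aestronglyMeasurable)
      (fun j b hb => stitKernel_nonneg (hI ha) (hI hb) m j)
      intervalIntegrable_const (fun b hb => hasSum_stitKernel (hI ha) (hI hb) m)

theorem hasSum_two_pow_mul_stitRowSum {a : ℝ} (ha : a ∈ Icc (0:ℝ) 1) :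
    HasSum (fun m : ℕ => 3 * 2^m * stitRowSum m a) (3 * (1 - a)^2) := by
  obtain ⟨ha0, ha1⟩ := ha
  rcases ha1.eq_or_lt with rfl | ha1
  · simp [stitRowSum]
  have h1a : 0 < 1 + a := by linarith
  have h1a' : 1 - a ≠ 0 := by linarith
  have hr : 2 * a / (1 + a) < 1 := (div_lt_one h1a).2 (by linarith)
  have hsum : 3 * (1 - a)^2 = 3 * (1 - a)^3 / (1 + a) * (1 - 2 * a / (1 + a))⁻¹ := by
    rw [one_sub_div h1a.ne', show 1 + a - 2 * a = 1 - a by ring]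
    field_simp
  rw [hsum]
  refine (hasSum_geometric_of_lt_one (by positivity) hr).mul_left _ |>.congr_fun fun m => ?_
  rw [stitRowSum, div_pow, mul_pow, pow_succ]
  field_simp
  ring

theorem hasSum_integral_two_pow_mul_stitRowSum :
    HasSum (fun m : ℕ => 3 * 2^m * ∫ a in (0:ℝ)..1, stitRowSum m a) 1 := by
  have hI := uIoc_zero_one_subset_Icc
  have h := hasSum_intervalIntegral_of_nonneg (μ := volume)
    (F := fun m a => 3 * 2^m * stitRowSum m a)
    (fun m => (by unfold stitRowSum; fun_prop : Measurable _).aestronglyMeasurable)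
    (fun m a ha => by have := stitRowSum_nonneg (hI ha) m; positivity)
    ((by fun_prop : Continuous fun a : ℝ => 3 * (1 - a)^2).intervalIntegrable _ _)
    (fun a ha => hasSum_two_pow_mul_stitRowSum (hI ha))
  simp only [intervalIntegral.integral_const_mul] at h
  convert h using 1
  rw [intervalIntegral.integral_comp_sub_left (fun x => x^2)]
  norm_num [integral_pow]

theorem stit_pmj_prob_dist :
    (∑' m : ℕ, ∑' j : ℕ, pTX m j) = 1 := by
  have hrow (m : ℕ) : HasSum (fun j => pTX m j) (3 * 2^m * ∫ a in (0:ℝ)..1, stitRowSum m a) := by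
    simpa only [pTX_eq_integral_stitKernel] using (hasSum_integral_stitKernel m).mul_left (3 * 2^m)
  rw [tsum_congr fun m => (hrow m).tsum_eq]
  exact hasSum_integral_two_pow_mul_stitRowSum.tsum_eq
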